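/- Let n ≥ 2, let k be a natural number with 1 ≤ k < n, let N ≥ 2 be an even natural number, 0 < ω < 2, μ ∈ ℝ, θ > 0 and σ > 0. Set C₃ = θ²/(θ² + σ²) and C₃min = min{C₃, ρ_{N,ω}}. Then the minimum of E_iid over B_{N,k,ω} is attained, and min_{T ∈ B_{N,k,ω}} E_iid(T) = (μ²/2)·n·(ρ_{N,ω} − 1)² + (θ²/2)·(k − 1)·(C₃min − 1)² + (θ²/2)·(n − k)·(ρ_{N,ω} − 1)² + (σ²/2)·(k − 1)·C₃min² + (σ²/2)·(n − k)·ρ_{N,ω}² + min{ (θ²/2)·(ρ_{N,ω} − 1)² + (σ²/2)·ρ_{N,ω}², (θ²/2)·(C₃min − 1)² + (σ²/2)·C₃min² }. -/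

import Mathlib

open Matrix

/-- The risk for the random i.i.d. vectors model:
`E_iid(T) = (μ²/2)‖(T − I)𝟙‖₂² + (θ²/2)‖T − I‖_F² + (σ²/2)‖T‖_F²`. -/
noncomputable def Eiid (n : ℕ) (μ θ σ : ℝ) (T : Matrix (Fin n) (Fin n) ℝ) : ℝ :=
  μ ^ 2 / 2 * (∑ i, ((T - 1).mulVec (fun _ : Fin n => 1) i) ^ 2)
    + θ ^ 2 / 2 * (∑ i, ∑ j, ((T - 1) i j) ^ 2)
    + σ ^ 2 / 2 * ∑ i, ∑ j, (T i j) ^ 2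

/-- The set of unrolling estimators
`B_{N,k,ω} = { (I + RᵀR)⁻¹(I − (I − ω(I + RᵀR))^N) : R ∈ ℝ^{k×n} }`. -/
def unrollingSet (N k n : ℕ) (ω : ℝ) : Set (Matrix (Fin n) (Fin n) ℝ) :=
  {U | ∃ R : Matrix (Fin k) (Fin n) ℝ,
    U = (1 + Rᵀ * R)⁻¹ * (1 - (1 - ω • (1 + Rᵀ * R)) ^ N)}




section Scalar
variable {N : ℕ} {ω θ σ : ℝ}

/-- the scalar transfer function -/
noncomputable def ffun (N : ℕ) (ω l : ℝ) : ℝ := (1 - (1 - ω * (1 + l)) ^ N) / (1 + l)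

lemma ffun_zero : ffun N ω 0 = 1 - (1 - ω) ^ N := by simp [ffun]

lemma rho_pos (hN2 : 2 ≤ N) (hω0 : 0 < ω) (hω2 : ω < 2) :
    0 < 1 - (1 - ω) ^ N := by
  have h1 : |1 - ω| < 1 := by rw [abs_lt]; constructor <;> linarith
  have : (1 - ω) ^ N < 1 := by
    calc (1 - ω) ^ N ≤ |(1 - ω) ^ N| := le_abs_self _
    _ = |1 - ω| ^ N := by rw [abs_pow]
    _ < 1 := pow_lt_one₀ (abs_nonneg _) h1 (by omega)
  linarith

lemma rho_le_one (hN : Even N) : 1 - (1 - ω) ^ N ≤ 1 := by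
  have := hN.pow_nonneg (1 - ω); linarith

/-- key upper bound: f(l) ≤ ρ for l ≥ 0 -/
lemma ffun_le_rho (hN : Even N) {l : ℝ} (hl : 0 ≤ l) :
    ffun N ω l ≤ 1 - (1 - ω) ^ N := by
  set τ : ℝ := 1 + l with hτ
  have hτ1 : 1 ≤ τ := by rw [hτ]; linarith
  have hτ0 : 0 < τ := by linarith
  have hconv : ConvexOn ℝ Set.univ fun x : ℝ => x ^ N := hN.convexOn_pow
  have harg : τ⁻¹ * (1 - ω * τ) + (1 - τ⁻¹) * 1 = 1 - ω := by
    field_simp; ring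
  have key : (1 - ω) ^ N ≤ τ⁻¹ * (1 - ω * τ) ^ N + (1 - τ⁻¹) * 1 ^ N := by
    have h := hconv.2 (Set.mem_univ (1 - ω * τ)) (Set.mem_univ (1 : ℝ))
      (by positivity : (0:ℝ) ≤ τ⁻¹) (by
        have : τ⁻¹ ≤ 1 := by
          rw [inv_le_one_iff₀]; right; exact hτ1
        linarith : (0:ℝ) ≤ 1 - τ⁻¹) (by ring)
    simp only [smul_eq_mul] at h
    rw [harg] at h
    exact h
  have key2 : τ * (1 - ω) ^ N ≤ (1 - ω * τ) ^ N + (τ - 1) := by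
    have h3 := mul_le_mul_of_nonneg_left key hτ0.le
    rw [one_pow] at h3
    have h4 : τ * ((1 - τ⁻¹) * 1) = τ - 1 := by
      field_simp
    rw [mul_add, ← mul_assoc, mul_inv_cancel₀ (ne_of_gt hτ0), one_mul, h4] at h3
    linarith
  rw [ffun, div_le_iff₀ hτ0, ← hτ]
  nlinarith [key2]

/-- the per-coordinate quadratic risk -/
noncomputable def gfun (θ σ t : ℝ) : ℝ := θ ^ 2 / 2 * (t - 1) ^ 2 + σ ^ 2 / 2 * t ^ 2

lemma gfun_min (hθ : 0 < θ) (hσ : 0 < σ) {ρ t : ℝ} (ht : t ≤ ρ) :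
    gfun θ σ (min (θ ^ 2 / (θ ^ 2 + σ ^ 2)) ρ) ≤ gfun θ σ t := by
  have hs : 0 < θ ^ 2 + σ ^ 2 := by positivity
  set C := θ ^ 2 / (θ ^ 2 + σ ^ 2) with hC
  have hCval : C * (θ ^ 2 + σ ^ 2) = θ ^ 2 := by
    rw [hC, div_mul_cancel₀ _ (ne_of_gt hs)]
  rcases le_or_gt C ρ with h | h
  · rw [min_eq_left h]
    unfold gfun
    nlinarith [sq_nonneg (t - C)]
  · rw [min_eq_right h.le]
    have hρθ : ρ * (θ ^ 2 + σ ^ 2) < θ ^ 2 := by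
      rw [hC, lt_div_iff₀ hs] at h; linarith
    unfold gfun
    nlinarith [hρθ, mul_nonneg (sub_nonneg.mpr ht) (sub_pos.mpr hρθ).le,
      mul_nonneg (mul_nonneg (sub_nonneg.mpr ht) (sub_nonneg.mpr ht)) hs.le]

lemma gfun_min_le_rho (hθ : 0 < θ) (hσ : 0 < σ) {ρ : ℝ} :
    gfun θ σ (min (θ ^ 2 / (θ ^ 2 + σ ^ 2)) ρ) ≤ gfun θ σ ρ := gfun_min hθ hσ le_rfl

/-- existence of l ≥ 0 with f(l) = C₃min -/
lemma exists_l (hN : Even N) (hN2 : 2 ≤ N) (hω0 : 0 < ω) (hω2 : ω < 2)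
    (hθ : 0 < θ) (hσ : 0 < σ) :
    ∃ l : ℝ, 0 ≤ l ∧ ffun N ω l = min (θ ^ 2 / (θ ^ 2 + σ ^ 2)) (1 - (1 - ω) ^ N) := by
  set ρ := 1 - (1 - ω) ^ N with hρ
  set C := θ ^ 2 / (θ ^ 2 + σ ^ 2) with hC
  rcases le_or_gt ρ C with h | h
  · exact ⟨0, le_rfl, by rw [min_eq_right h, ffun_zero]⟩
  · rw [min_eq_left h.le]
    have hCpos : 0 < C := by positivity
    set L : ℝ := 2 / ω with hL
    have hLpos : 0 < L := by positivity
    have hfL : ffun N ω L ≤ 0 := by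
      have h1 : 1 - ω * (1 + L) ≤ -1 := by
        have : ω * L = 2 := by rw [hL]; field_simp
        nlinarith
      have h2 : 1 ≤ (1 - ω * (1 + L)) ^ N := by
        have h3 : (1:ℝ) ^ N ≤ (-(1 - ω * (1 + L))) ^ N :=
          pow_le_pow_left₀ (by norm_num) (by linarith) N
        rwa [one_pow, hN.neg_pow] at h3
      apply div_nonpos_of_nonpos_of_nonneg <;> linarith
    have hcont : ContinuousOn (ffun N ω) (Set.Icc 0 L) := by
      apply ContinuousOn.div
      · fun_prop
      · fun_prop
      · intro x hx hc
        have := hx.1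
        linarith
    have hmem : C ∈ Set.Icc (ffun N ω L) (ffun N ω 0) := by
      constructor
      · linarith
      · rw [ffun_zero]; linarith
    obtain ⟨l, hl, hfl⟩ := intermediate_value_Icc' hLpos.le hcont hmem
    exact ⟨l, hl.1, hfl⟩

end Scalar
section Conj
variable {n : ℕ} {Q : Matrix (Fin n) (Fin n) ℝ}

/-- conjugation of a diagonal matrix -/
def conjD (Q : Matrix (Fin n) (Fin n) ℝ) (d : Fin n → ℝ) : Matrix (Fin n) (Fin n) ℝ :=
  Q * Matrix.diagonal d * Qᵀ

lemma conjD_mul (hQ : Qᵀ * Q = 1) (d₁ d₂ : Fin n → ℝ) :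
    conjD Q d₁ * conjD Q d₂ = conjD Q (fun i => d₁ i * d₂ i) := by
  unfold conjD
  rw [mul_assoc (Q * diagonal d₁) Qᵀ, ← mul_assoc Qᵀ, ← mul_assoc Qᵀ, hQ, one_mul,
    ← mul_assoc (Q * diagonal d₁), mul_assoc Q, diagonal_mul_diagonal]

lemma conjD_one (hQ' : Q * Qᵀ = 1) : conjD Q (fun _ => 1) = 1 := by
  unfold conjD
  have h1 : (diagonal fun _ : Fin n => (1:ℝ)) = 1 := by
    ext i j
    by_cases h : i = j <;> simp [Matrix.diagonal_apply, Matrix.one_apply, h]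
  rw [h1, mul_one, hQ']

lemma conjD_add (d₁ d₂ : Fin n → ℝ) :
    conjD Q d₁ + conjD Q d₂ = conjD Q (fun i => d₁ i + d₂ i) := by
  unfold conjD
  rw [← add_mul, ← mul_add, diagonal_add]

lemma conjD_sub (d₁ d₂ : Fin n → ℝ) :
    conjD Q d₁ - conjD Q d₂ = conjD Q (fun i => d₁ i - d₂ i) := by
  unfold conjD
  rw [← sub_mul, ← mul_sub, diagonal_sub]

lemma conjD_smul (c : ℝ) (d : Fin n → ℝ) :
    c • conjD Q d = conjD Q (fun i => c * d i) := by
  unfold conjD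
  rw [show Matrix.diagonal (fun i => c * d i) = c • Matrix.diagonal d from by
      rw [← diagonal_smul]; rfl,
    mul_smul_comm, smul_mul_assoc]

lemma conjD_pow (hQ : Qᵀ * Q = 1) (hQ' : Q * Qᵀ = 1) (d : Fin n → ℝ) (m : ℕ) :
    (conjD Q d) ^ m = conjD Q (fun i => d i ^ m) := by
  induction m with
  | zero =>
    simp only [pow_zero]
    exact (conjD_one hQ').symm
  | succ m ih =>
    rw [pow_succ, ih, conjD_mul hQ]
    congr 1

lemma conjD_inv (hQ : Qᵀ * Q = 1) (hQ' : Q * Qᵀ = 1) (d : Fin n → ℝ)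
    (hd : ∀ i, d i ≠ 0) : (conjD Q d)⁻¹ = conjD Q (fun i => (d i)⁻¹) := by
  apply inv_eq_right_inv
  rw [conjD_mul hQ]
  rw [show (fun i => d i * (d i)⁻¹) = fun _ : Fin n => (1:ℝ) from by
    funext i; exact mul_inv_cancel₀ (hd i)]
  exact conjD_one hQ'

/-- The functional calculus for the unrolling estimator. -/
lemma unroll_eq (hQ : Qᵀ * Q = 1) (hQ' : Q * Qᵀ = 1) (d : Fin n → ℝ)
    (hd : ∀ i, 0 ≤ d i) (N : ℕ) (ω : ℝ) :
    (1 + conjD Q d)⁻¹ * (1 - (1 - ω • (1 + conjD Q d)) ^ N)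
      = conjD Q (fun i => ffun N ω (d i)) := by
  have hone : (1 : Matrix (Fin n) (Fin n) ℝ) = conjD Q (fun _ => 1) := (conjD_one hQ').symm
  have h1 : 1 + conjD Q d = conjD Q (fun i => 1 + d i) := by
    rw [hone, conjD_add]
  have h2 : 1 - ω • (1 + conjD Q d) = conjD Q (fun i => 1 - ω * (1 + d i)) := by
    rw [h1, conjD_smul]
    nth_rewrite 1 [hone]
    rw [conjD_sub]
  have h3 : 1 - (1 - ω • (1 + conjD Q d)) ^ N
      = conjD Q (fun i => 1 - (1 - ω * (1 + d i)) ^ N) := by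
    rw [h2, conjD_pow hQ hQ']
    nth_rewrite 1 [hone]
    rw [conjD_sub]
  have h4 : (1 + conjD Q d)⁻¹ = conjD Q (fun i => (1 + d i)⁻¹) := by
    rw [h1, conjD_inv hQ hQ']
    intro i; have := hd i; positivity
  rw [h3, h4, conjD_mul hQ]
  congr 1; funext i
  simp only [ffun, div_eq_inv_mul]

end Conj
section EiidFormula
variable {n : ℕ} {Q : Matrix (Fin n) (Fin n) ℝ}

lemma conjD_transpose (e : Fin n → ℝ) : (conjD Q e)ᵀ = conjD Q e := by
  unfold conjD
  rw [transpose_mul, transpose_mul, transpose_transpose, diagonal_transpose, mul_assoc]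

lemma sum_sq_conjD (hQ : Qᵀ * Q = 1) (e : Fin n → ℝ) :
    ∑ i, ∑ j, (conjD Q e i j) ^ 2 = ∑ i, e i ^ 2 := by
  have hsym : ∀ i j, conjD Q e j i = conjD Q e i j := by
    intro i j
    conv_lhs => rw [← conjD_transpose (Q := Q) e]
    rfl
  have h1 : trace (conjD Q e * conjD Q e) = ∑ i, ∑ j, (conjD Q e i j) ^ 2 := by
    rw [Matrix.trace]
    apply Finset.sum_congr rfl
    intro i _
    rw [Matrix.diag, Matrix.mul_apply]
    apply Finset.sum_congr rfl
    intro j _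
    rw [hsym j i, sq]
  rw [← h1, conjD_mul hQ]
  unfold conjD
  rw [Matrix.trace_mul_comm, ← mul_assoc, hQ, one_mul, trace_diagonal]
  apply Finset.sum_congr rfl
  intro i _
  rw [sq]

lemma sum_sq_mulVec_conjD (hQ : Qᵀ * Q = 1) (e : Fin n → ℝ) (v : Fin n → ℝ) :
    ∑ i, ((conjD Q e).mulVec v i) ^ 2 = ∑ i, (e i) ^ 2 * ((Qᵀ *ᵥ v) i) ^ 2 := by
  set c : Fin n → ℝ := Qᵀ *ᵥ v with hc
  set u : Fin n → ℝ := fun i => e i * c i with hu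
  have hdiag : diagonal e *ᵥ c = u := by
    funext i
    exact mulVec_diagonal e c i
  have hw : (conjD Q e) *ᵥ v = Q *ᵥ u := by
    unfold conjD
    rw [← mulVec_mulVec, ← mulVec_mulVec, ← hc, hdiag]
  have hdot : (Q *ᵥ u) ⬝ᵥ (Q *ᵥ u) = u ⬝ᵥ u := by
    rw [dotProduct_mulVec, ← mulVec_transpose, mulVec_mulVec, hQ, one_mulVec]
  calc ∑ i, ((conjD Q e).mulVec v i) ^ 2
      = (conjD Q e *ᵥ v) ⬝ᵥ (conjD Q e *ᵥ v) := by
        rw [dotProduct]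
        apply Finset.sum_congr rfl
        intro i _
        rw [sq]
    _ = u ⬝ᵥ u := by rw [hw, hdot]
    _ = ∑ i, (e i) ^ 2 * (c i) ^ 2 := by
        rw [dotProduct]
        apply Finset.sum_congr rfl
        intro i _
        rw [hu]
        ring

lemma sum_sq_coeff (hQ' : Q * Qᵀ = 1) :
    ∑ i, ((Qᵀ *ᵥ (fun _ : Fin n => (1:ℝ))) i) ^ 2 = (n : ℝ) := by
  have hdot : (Qᵀ *ᵥ (fun _ : Fin n => (1:ℝ))) ⬝ᵥ (Qᵀ *ᵥ (fun _ : Fin n => (1:ℝ)))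
      = (fun _ : Fin n => (1:ℝ)) ⬝ᵥ (fun _ : Fin n => (1:ℝ)) := by
    rw [dotProduct_mulVec, ← mulVec_transpose, transpose_transpose, mulVec_mulVec, hQ',
      one_mulVec]
  have h1 : ∑ i, ((Qᵀ *ᵥ (fun _ : Fin n => (1:ℝ))) i) ^ 2
      = (Qᵀ *ᵥ (fun _ : Fin n => (1:ℝ))) ⬝ᵥ (Qᵀ *ᵥ (fun _ : Fin n => (1:ℝ))) := by
    rw [dotProduct]
    apply Finset.sum_congr rfl
    intro i _
    rw [sq]
  rw [h1, hdot, dotProduct]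
  simp

lemma Eiid_conjD (hQ : Qᵀ * Q = 1) (hQ' : Q * Qᵀ = 1) (μ θ σ : ℝ) (d : Fin n → ℝ) :
    Eiid n μ θ σ (conjD Q d)
      = μ ^ 2 / 2 * (∑ i, (d i - 1) ^ 2 * ((Qᵀ *ᵥ (fun _ : Fin n => (1:ℝ))) i) ^ 2)
        + ∑ i, gfun θ σ (d i) := by
  have hsub : conjD Q d - 1 = conjD Q (fun i => d i - 1) := by
    nth_rewrite 1 [← conjD_one hQ']
    rw [conjD_sub]
  unfold Eiid
  rw [hsub, sum_sq_conjD hQ, sum_sq_conjD hQ, sum_sq_mulVec_conjD hQ]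
  unfold gfun
  rw [Finset.sum_add_distrib, ← Finset.mul_sum, ← Finset.mul_sum]
  ring

end EiidFormula
section Lower
variable {n k N : ℕ} {ω μ θ σ : ℝ}

lemma sum_g_bound (hkn : k ≤ n) (hN : Even N) (hθ : 0 < θ) (hσ : 0 < σ)
    (ev : Fin n → ℝ) (hev : ∀ i, 0 ≤ ev i)
    (hcard : (Finset.univ.filter (fun i => ev i ≠ 0)).card ≤ k) :
    ((n:ℝ) - k) * gfun θ σ (1 - (1 - ω) ^ N)
      + k * gfun θ σ (min (θ ^ 2 / (θ ^ 2 + σ ^ 2)) (1 - (1 - ω) ^ N))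
      ≤ ∑ i, gfun θ σ (ffun N ω (ev i)) := by
  set ρ := 1 - (1 - ω) ^ N with hρ
  set gρ := gfun θ σ ρ with hgρ
  set gC := gfun θ σ (min (θ ^ 2 / (θ ^ 2 + σ ^ 2)) ρ) with hgC
  have hgCρ : gC ≤ gρ := gfun_min_le_rho hθ hσ
  have hterm : ∀ i, gC ≤ gfun θ σ (ffun N ω (ev i)) := fun i =>
    gfun_min hθ hσ (ffun_le_rho hN (hev i))
  set Z := Finset.univ.filter (fun i => ev i ≠ 0) with hZ
  set Zc := Finset.univ.filter (fun i => ¬ ev i ≠ 0) with hZc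
  have hsplit : ∑ i ∈ Z, gfun θ σ (ffun N ω (ev i)) + ∑ i ∈ Zc, gfun θ σ (ffun N ω (ev i))
      = ∑ i, gfun θ σ (ffun N ω (ev i)) :=
    Finset.sum_filter_add_sum_filter_not _ _ _
  have hZcsum : ∑ i ∈ Zc, gfun θ σ (ffun N ω (ev i)) = (Zc.card : ℝ) * gρ := by
    rw [Finset.sum_congr rfl (fun i hi => ?_), Finset.sum_const, nsmul_eq_mul]
    rw [hZc, Finset.mem_filter] at hi
    have : ev i = 0 := not_not.mp hi.2
    rw [this, ffun_zero, hgρ, hρ]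
  have hZsum : (Z.card : ℝ) * gC ≤ ∑ i ∈ Z, gfun θ σ (ffun N ω (ev i)) := by
    calc (Z.card : ℝ) * gC = ∑ _i ∈ Z, gC := by rw [Finset.sum_const, nsmul_eq_mul]
    _ ≤ _ := Finset.sum_le_sum (fun i _ => hterm i)
  have hcards : Z.card + Zc.card = n := by
    rw [hZ, hZc, Finset.card_filter_add_card_filter_not, Finset.card_univ,
      Fintype.card_fin]
  have hzk : (Z.card : ℝ) ≤ k := by exact_mod_cast hcard
  have hzc : (Zc.card : ℝ) = n - Z.card := by
    have : (Z.card : ℝ) + Zc.card = n := by exact_mod_cast hcards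
    linarith
  rw [← hsplit, hZcsum, hzc]
  nlinarith [hZsum, hzk, hgCρ]

lemma Eiid_lower (hkn : k ≤ n) (hN : Even N) (hN2 : 2 ≤ N)
    (hω0 : 0 < ω) (hω2 : ω < 2) (hθ : 0 < θ) (hσ : 0 < σ)
    (R : Matrix (Fin k) (Fin n) ℝ) :
    μ ^ 2 / 2 * n * ((1 - (1 - ω) ^ N) - 1) ^ 2
      + (((n:ℝ) - k) * gfun θ σ (1 - (1 - ω) ^ N)
      + k * gfun θ σ (min (θ ^ 2 / (θ ^ 2 + σ ^ 2)) (1 - (1 - ω) ^ N)))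
      ≤ Eiid n μ θ σ ((1 + Rᵀ * R)⁻¹ * (1 - (1 - ω • (1 + Rᵀ * R)) ^ N)) := by
  have htrans : Rᵀ = Rᴴ := (Matrix.conjTranspose_eq_transpose_of_trivial R).symm
  have hH : (Rᵀ * R).IsHermitian := by
    rw [htrans]; exact isHermitian_conjTranspose_mul_self R
  have hpsd : (Rᵀ * R).PosSemidef := by
    rw [htrans]; exact posSemidef_conjTranspose_mul_self R
  set Q : Matrix (Fin n) (Fin n) ℝ := (hH.eigenvectorUnitary : Matrix (Fin n) (Fin n) ℝ)
    with hQdef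
  set ev : Fin n → ℝ := hH.eigenvalues with hev
  have hstar : star Q = Qᵀ := by
    rw [Matrix.star_eq_conjTranspose, Matrix.conjTranspose_eq_transpose_of_trivial]
  have hQmem := hH.eigenvectorUnitary.2
  rw [Unitary.mem_iff] at hQmem
  have hQ : Qᵀ * Q = 1 := by rw [← hstar]; exact hQmem.1
  have hQ' : Q * Qᵀ = 1 := by rw [← hstar]; exact hQmem.2
  have hspec : Rᵀ * R = conjD Q ev := by
    have := hH.spectral_theorem
    rw [Unitary.conjStarAlgAut_apply, ← hQdef, hstar] at this
    rw [this]; rfl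
  have hev0 : ∀ i, 0 ≤ ev i := hpsd.eigenvalues_nonneg
  have hcard : (Finset.univ.filter (fun i => ev i ≠ 0)).card ≤ k := by
    classical
    have h1 : Fintype.card {i // ev i ≠ 0} ≤ k := by
      rw [← hH.rank_eq_card_non_zero_eigs]
      calc (Rᵀ * R).rank = R.rank := rank_transpose_mul_self R
      _ ≤ Fintype.card (Fin k) := rank_le_card_height R
      _ = k := Fintype.card_fin k
    rwa [Fintype.card_subtype] at h1
  rw [hspec, unroll_eq hQ hQ' ev hev0 N ω, Eiid_conjD hQ hQ' μ θ σ]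
  have hμterm : μ ^ 2 / 2 * n * ((1 - (1 - ω) ^ N) - 1) ^ 2
      ≤ μ ^ 2 / 2 * (∑ i, (ffun N ω (ev i) - 1) ^ 2
        * ((Qᵀ *ᵥ (fun _ : Fin n => (1:ℝ))) i) ^ 2) := by
    have hbd : ∀ i, ((1 - (1 - ω) ^ N) - 1) ^ 2 * ((Qᵀ *ᵥ (fun _ : Fin n => (1:ℝ))) i) ^ 2
        ≤ (ffun N ω (ev i) - 1) ^ 2 * ((Qᵀ *ᵥ (fun _ : Fin n => (1:ℝ))) i) ^ 2 := by
      intro i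
      apply mul_le_mul_of_nonneg_right _ (sq_nonneg _)
      have h1 : ffun N ω (ev i) ≤ 1 - (1 - ω) ^ N := ffun_le_rho hN (hev0 i)
      have h2 : 1 - (1 - ω) ^ N ≤ 1 := rho_le_one hN
      nlinarith
    calc μ ^ 2 / 2 * n * ((1 - (1 - ω) ^ N) - 1) ^ 2
        = μ ^ 2 / 2 * (((1 - (1 - ω) ^ N) - 1) ^ 2
          * ∑ i, ((Qᵀ *ᵥ (fun _ : Fin n => (1:ℝ))) i) ^ 2) := by
          rw [sum_sq_coeff hQ']; ring
      _ = μ ^ 2 / 2 * ∑ i, ((1 - (1 - ω) ^ N) - 1) ^ 2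
          * ((Qᵀ *ᵥ (fun _ : Fin n => (1:ℝ))) i) ^ 2 := by rw [Finset.mul_sum]
      _ ≤ _ := by
          apply mul_le_mul_of_nonneg_left _ (by positivity)
          exact Finset.sum_le_sum (fun i _ => hbd i)
  have hgterm := sum_g_bound (ω := ω) hkn hN hθ hσ ev hev0 hcard
  linarith
end Lower
section Member
variable {n : ℕ}

lemma vecMulVec_mul_self_aux (u : Fin n → ℝ) :
    vecMulVec u u * vecMulVec u u = (u ⬝ᵥ u) • vecMulVec u u := by
  ext a b
  simp only [Matrix.mul_apply, vecMulVec_apply, Matrix.smul_apply, dotProduct,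
    smul_eq_mul, Finset.sum_mul]
  apply Finset.sum_congr rfl
  intro j _
  ring

/-- the Householder matrix sending `e₀` to `𝟙/√n`. -/
lemma exists_householder [NeZero n] (hn : 2 ≤ n) :
    ∃ Q : Matrix (Fin n) (Fin n) ℝ, Qᵀ * Q = 1 ∧ Q * Qᵀ = 1 ∧
      Qᵀ *ᵥ (fun _ : Fin n => (1:ℝ)) = Real.sqrt n • (Pi.single (0 : Fin n) (1:ℝ) : Fin n → ℝ) := by
  have hn0 : (0:ℝ) < n := by positivity
  have hsq : Real.sqrt n * Real.sqrt n = n := Real.mul_self_sqrt (le_of_lt hn0)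
  have hs1 : 1 < Real.sqrt n := by
    have h2 : (1:ℝ) < n := by exact_mod_cast (by omega : 1 < n)
    calc (1:ℝ) = Real.sqrt 1 := Real.sqrt_one.symm
    _ < _ := Real.sqrt_lt_sqrt (by norm_num) h2
  set s : ℝ := (Real.sqrt n)⁻¹ with hs
  have hspos : 0 < s := by positivity
  have hslt : s < 1 := by
    rw [hs, inv_lt_one_iff₀]; right; exact hs1
  have hsn : (n:ℝ) * (s * s) = 1 := by
    rw [hs, ← mul_inv]
    rw [hsq]
    field_simp
  set u : Fin n → ℝ := fun j => (if j = 0 then (1:ℝ) else 0) - s with hu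
  have husq : u ⬝ᵥ u = 2 - 2 * s := by
    rw [dotProduct]
    have h1 : ∀ j : Fin n, u j * u j = s * s + (if j = (0:Fin n) then 1 - 2*s else 0) := by
      intro j
      by_cases h : j = 0 <;> simp [hu, h] <;> ring
    rw [Finset.sum_congr rfl (fun j _ => h1 j), Finset.sum_add_distrib, Finset.sum_const,
      Finset.sum_ite_eq' Finset.univ (0 : Fin n) (fun _ => 1 - 2*s)]
    simp only [Finset.mem_univ, if_true, Finset.card_univ, Fintype.card_fin, nsmul_eq_mul]
    rw [hsn]
    ring
  set κ : ℝ := (1 - s)⁻¹ with hκ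
  have h1s : (1:ℝ) - s ≠ 0 := by linarith
  have hκ1s : κ * (1 - s) = 1 := inv_mul_cancel₀ h1s
  set M : Matrix (Fin n) (Fin n) ℝ := vecMulVec u u with hM
  set Q : Matrix (Fin n) (Fin n) ℝ := 1 - κ • M with hQdef
  have hMsym : Mᵀ = M := by
    rw [hM]; ext a b; simp [vecMulVec_apply]; ring
  have hQsym : Qᵀ = Q := by
    rw [hQdef, transpose_sub, transpose_one, transpose_smul, hMsym]
  have hAA : (κ • M) * (κ • M) = κ • M + κ • M := by
    rw [smul_mul_smul_comm, hM, vecMulVec_mul_self_aux, husq, smul_smul, ← add_smul]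
    congr 1
    rw [hκ]
    field_simp
    ring
  have hQQ : Q * Q = 1 := by
    rw [hQdef, sub_mul, mul_sub, mul_sub, one_mul, mul_one, hAA]
    simp only [one_mul, mul_one]
    abel
  have hQ : Qᵀ * Q = 1 := by rw [hQsym]; exact hQQ
  have hQ' : Q * Qᵀ = 1 := by rw [hQsym]; exact hQQ
  refine ⟨Q, hQ, hQ', ?_⟩
  have hcol : ∀ j, Q j 0 = s := by
    intro j
    rw [hQdef]
    simp only [Matrix.sub_apply, Matrix.one_apply, Matrix.smul_apply, hM, vecMulVec_apply,
      smul_eq_mul]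
    have hu0 : u 0 = 1 - s := by simp [hu]
    by_cases h : j = 0
    · subst h
      rw [hu0, if_pos rfl]
      have : κ * ((1-s) * (1-s)) = 1 - s := by
        rw [← mul_assoc, hκ1s, one_mul]
      rw [this]
      ring
    · have huj : u j = -s := by simp [hu, h]
      rw [if_neg h, huj, hu0]
      have : κ * (-s * (1 - s)) = -s := by
        rw [mul_comm (-s) (1-s), ← mul_assoc, hκ1s, one_mul]
      rw [this]
      ring
  have hones : (fun _ : Fin n => (1:ℝ))
      = Q *ᵥ Real.sqrt n • (Pi.single (0 : Fin n) (1:ℝ) : Fin n → ℝ) := by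
    funext j
    rw [Matrix.mulVec, dotProduct]
    have h2 : ∀ i : Fin n, Q j i * (Real.sqrt n • (Pi.single (0:Fin n) (1:ℝ) : Fin n → ℝ)) i
        = if i = 0 then Q j 0 * Real.sqrt n else 0 := by
      intro i
      by_cases h : i = 0
      · subst h; simp [Pi.single_apply, mul_comm]
      · simp [Pi.single_apply, h]
    rw [Finset.sum_congr rfl (fun i _ => h2 i),
      Finset.sum_ite_eq' Finset.univ (0 : Fin n) (fun _ => Q j 0 * Real.sqrt n)]
    simp only [Finset.mem_univ, if_true]
    rw [hcol j, hs]
    field_simp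
  rw [hones, mulVec_mulVec, hQ, one_mulVec]
end Member
section Attain
variable {n k N : ℕ} {ω μ θ σ : ℝ}

lemma Eiid_attained (hn : 2 ≤ n) (hk1 : 1 ≤ k) (hk : k < n)
    (hN : Even N) (hN2 : 2 ≤ N) (hω0 : 0 < ω) (hω2 : ω < 2) (hθ : 0 < θ) (hσ : 0 < σ) :
    ∃ R : Matrix (Fin k) (Fin n) ℝ,
      Eiid n μ θ σ ((1 + Rᵀ * R)⁻¹ * (1 - (1 - ω • (1 + Rᵀ * R)) ^ N))
        = μ ^ 2 / 2 * n * ((1 - (1 - ω) ^ N) - 1) ^ 2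
          + (((n:ℝ) - k) * gfun θ σ (1 - (1 - ω) ^ N)
          + k * gfun θ σ (min (θ ^ 2 / (θ ^ 2 + σ ^ 2)) (1 - (1 - ω) ^ N))) := by
  haveI : NeZero n := ⟨by omega⟩
  obtain ⟨Q, hQ, hQ', hcvec⟩ := exists_householder hn
  obtain ⟨l, hl0, hfl⟩ := exists_l (θ := θ) (σ := σ) hN hN2 hω0 hω2 hθ hσ
  set lam : Fin n → ℝ := fun j => if 1 ≤ j.val ∧ j.val ≤ k then l else 0 with hlam
  set emb : Fin k → Fin n := fun i => ⟨i.val + 1, by omega⟩ with hemb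
  have hinj : Function.Injective emb := by
    intro x y hxy
    apply Fin.ext
    have h1 : (emb x).val = (emb y).val := congrArg Fin.val hxy
    simpa [hemb] using h1
  have himg : Finset.image emb Finset.univ
      = Finset.univ.filter (fun j : Fin n => 1 ≤ j.val ∧ j.val ≤ k) := by
    ext j
    simp only [Finset.mem_image, Finset.mem_univ, true_and, Finset.mem_filter]
    constructor
    · rintro ⟨i, rfl⟩
      have := i.isLt
      simp only [hemb]
      omega
    · rintro ⟨h1, h2⟩
      refine ⟨⟨j.val - 1, by omega⟩, ?_⟩
      apply Fin.ext
      simp only [hemb]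
      omega
  set R : Matrix (Fin k) (Fin n) ℝ := Matrix.of (fun i j => Real.sqrt l * Q j (emb i))
    with hR
  have hlamP : ∀ j : Fin n, (1 ≤ j.val ∧ j.val ≤ k) → lam j = l := by
    intro j hj; rw [hlam]; exact if_pos hj
  have hlamN : ∀ j : Fin n, ¬(1 ≤ j.val ∧ j.val ≤ k) → lam j = 0 := by
    intro j hj; rw [hlam]; exact if_neg hj
  have hRR : Rᵀ * R = conjD Q lam := by
    ext a b
    rw [Matrix.mul_apply]
    unfold conjD
    rw [Matrix.mul_apply]
    have hrhs : ∀ j, (Q * diagonal lam) a j * Qᵀ j b = Q a j * lam j * Q b j := by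
      intro j
      rw [Matrix.mul_diagonal, Matrix.transpose_apply]
    rw [Finset.sum_congr rfl (fun j _ => hrhs j)]
    rw [← Finset.sum_subset (Finset.subset_univ
        (Finset.univ.filter (fun j : Fin n => 1 ≤ j.val ∧ j.val ≤ k)))
      (by
        intro j _ hj
        have hPj : ¬(1 ≤ j.val ∧ j.val ≤ k) := by simpa using hj
        rw [hlamN j hPj]
        ring)]
    rw [← himg, Finset.sum_image (fun x _ y _ h => hinj h)]
    apply Finset.sum_congr rfl
    intro i _
    have hP : 1 ≤ (emb i).val ∧ (emb i).val ≤ k := by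
      have := i.isLt
      simp only [hemb]
      omega
    rw [hlamP _ hP, Matrix.transpose_apply, hR]
    simp only [Matrix.of_apply]
    have hll : Real.sqrt l * Real.sqrt l = l := Real.mul_self_sqrt hl0
    linear_combination (Q a (emb i) * Q b (emb i)) * hll
  have hlam0 : ∀ i, 0 ≤ lam i := by
    intro i
    by_cases h : 1 ≤ i.val ∧ i.val ≤ k
    · rw [hlamP i h]; exact hl0
    · rw [hlamN i h]
  refine ⟨R, ?_⟩
  rw [hRR, unroll_eq hQ hQ' lam hlam0 N ω, Eiid_conjD hQ hQ' μ θ σ, hcvec]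
  have hsq : Real.sqrt n * Real.sqrt n = n := Real.mul_self_sqrt (by positivity)
  have hlamzero : lam 0 = 0 := hlamN 0 (by simp)
  -- first sum
  have hsum1 : ∑ i, (ffun N ω (lam i) - 1) ^ 2
        * ((Real.sqrt n • (Pi.single (0 : Fin n) (1:ℝ) : Fin n → ℝ)) i) ^ 2
      = ((1 - (1 - ω) ^ N) - 1) ^ 2 * n := by
    have h2 : ∀ i : Fin n, (ffun N ω (lam i) - 1) ^ 2
        * ((Real.sqrt n • (Pi.single (0 : Fin n) (1:ℝ) : Fin n → ℝ)) i) ^ 2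
        = if i = 0 then ((1 - (1 - ω) ^ N) - 1) ^ 2 * n else 0 := by
      intro i
      by_cases h : i = 0
      · subst h
        simp only [Pi.smul_apply, Pi.single_apply, smul_eq_mul, if_true, mul_one]
        rw [hlamzero, ffun_zero, Real.sq_sqrt (by positivity : (0:ℝ) ≤ (n:ℝ))]
      · simp [Pi.single_apply, h]
    rw [Finset.sum_congr rfl (fun i _ => h2 i),
      Finset.sum_ite_eq' Finset.univ (0 : Fin n) (fun _ => ((1 - (1 - ω) ^ N) - 1) ^ 2 * n)]
    simp
  -- second sum
  have hcard1 : (Finset.univ.filter (fun j : Fin n => 1 ≤ j.val ∧ j.val ≤ k)).card = k := by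
    rw [← himg, Finset.card_image_of_injective _ hinj, Finset.card_univ, Fintype.card_fin]
  have hcard2 : (Finset.univ.filter (fun j : Fin n => ¬(1 ≤ j.val ∧ j.val ≤ k))).card
      = n - k := by
    have := Finset.card_filter_add_card_filter_not (s := (Finset.univ : Finset (Fin n)))
      (p := fun j : Fin n => 1 ≤ j.val ∧ j.val ≤ k)
    rw [hcard1, Finset.card_univ, Fintype.card_fin] at this
    omega
  have hsum2 : ∑ i, gfun θ σ (ffun N ω (lam i))
      = (k : ℝ) * gfun θ σ (min (θ ^ 2 / (θ ^ 2 + σ ^ 2)) (1 - (1 - ω) ^ N))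
        + ((n : ℝ) - k) * gfun θ σ (1 - (1 - ω) ^ N) := by
    have h3 : ∀ i : Fin n, gfun θ σ (ffun N ω (lam i))
        = if 1 ≤ i.val ∧ i.val ≤ k
          then gfun θ σ (min (θ ^ 2 / (θ ^ 2 + σ ^ 2)) (1 - (1 - ω) ^ N))
          else gfun θ σ (1 - (1 - ω) ^ N) := by
      intro i
      by_cases h : 1 ≤ i.val ∧ i.val ≤ k
      · rw [if_pos h, hlamP i h, hfl]
      · rw [if_neg h, hlamN i h, ffun_zero]
    rw [Finset.sum_congr rfl (fun i _ => h3 i), Finset.sum_ite, Finset.sum_const,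
      Finset.sum_const, hcard1, hcard2, nsmul_eq_mul, nsmul_eq_mul,
      Nat.cast_sub hk.le]
  rw [hsum1, hsum2]
  ring
end Attain

/-- Best unrolling risk, random i.i.d. vectors, `N` even, `1 ≤ k < n`:
with `ρ = ρ_{N,ω} = 1 − (1−ω)^N`, `C₃ = θ²/(θ²+σ²)` and `C₃min = min{C₃, ρ}`, the
minimum of `E_iid` over `B_{N,k,ω}` is attained and equals
`(μ²/2)n(ρ−1)² + (θ²/2)(k−1)(C₃min−1)² + (θ²/2)(n−k)(ρ−1)² + (σ²/2)(k−1)C₃min²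
 + (σ²/2)(n−k)ρ² + min{(θ²/2)(ρ−1)² + (σ²/2)ρ², (θ²/2)(C₃min−1)² + (σ²/2)C₃min²}`. -/
theorem best_unrolling_iid_even_k_lt_n (n k N : ℕ) (hn : 2 ≤ n) (hk1 : 1 ≤ k)
    (hk : k < n) (hN : Even N) (hN2 : 2 ≤ N) (ω : ℝ) (hω0 : 0 < ω) (hω2 : ω < 2)
    (μ : ℝ) (θ σ : ℝ) (hθ : 0 < θ) (hσ : 0 < σ) :
    IsLeast (Eiid n μ θ σ '' unrollingSet N k n ω)
      (μ ^ 2 / 2 * (n : ℝ) * ((1 - (1 - ω) ^ N) - 1) ^ 2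
        + θ ^ 2 / 2 * ((k : ℝ) - 1) *
            (min (θ ^ 2 / (θ ^ 2 + σ ^ 2)) (1 - (1 - ω) ^ N) - 1) ^ 2
        + θ ^ 2 / 2 * ((n : ℝ) - (k : ℝ)) * ((1 - (1 - ω) ^ N) - 1) ^ 2
        + σ ^ 2 / 2 * ((k : ℝ) - 1) *
            (min (θ ^ 2 / (θ ^ 2 + σ ^ 2)) (1 - (1 - ω) ^ N)) ^ 2
        + σ ^ 2 / 2 * ((n : ℝ) - (k : ℝ)) * (1 - (1 - ω) ^ N) ^ 2
        + min
            (θ ^ 2 / 2 * ((1 - (1 - ω) ^ N) - 1) ^ 2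
              + σ ^ 2 / 2 * (1 - (1 - ω) ^ N) ^ 2)
            (θ ^ 2 / 2 *
                (min (θ ^ 2 / (θ ^ 2 + σ ^ 2)) (1 - (1 - ω) ^ N) - 1) ^ 2
              + σ ^ 2 / 2 *
                  (min (θ ^ 2 / (θ ^ 2 + σ ^ 2)) (1 - (1 - ω) ^ N)) ^ 2)) := by
  have hgle := gfun_min_le_rho (θ := θ) (σ := σ) (ρ := 1 - (1 - ω) ^ N) hθ hσ
  unfold gfun at hgle
  have hmin : min
      (θ ^ 2 / 2 * ((1 - (1 - ω) ^ N) - 1) ^ 2 + σ ^ 2 / 2 * (1 - (1 - ω) ^ N) ^ 2)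
      (θ ^ 2 / 2 * (min (θ ^ 2 / (θ ^ 2 + σ ^ 2)) (1 - (1 - ω) ^ N) - 1) ^ 2
        + σ ^ 2 / 2 * (min (θ ^ 2 / (θ ^ 2 + σ ^ 2)) (1 - (1 - ω) ^ N)) ^ 2)
      = θ ^ 2 / 2 * (min (θ ^ 2 / (θ ^ 2 + σ ^ 2)) (1 - (1 - ω) ^ N) - 1) ^ 2
        + σ ^ 2 / 2 * (min (θ ^ 2 / (θ ^ 2 + σ ^ 2)) (1 - (1 - ω) ^ N)) ^ 2 :=
    min_eq_right hgle
  constructor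
  · obtain ⟨R, hR⟩ := Eiid_attained (μ := μ) hn hk1 hk hN hN2 hω0 hω2 hθ hσ
    refine ⟨_, ⟨R, rfl⟩, ?_⟩
    rw [hR, hmin]
    unfold gfun
    ring
  · rintro y ⟨U, ⟨R, rfl⟩, rfl⟩
    have h := Eiid_lower (μ := μ) hk.le hN hN2 hω0 hω2 hθ hσ R
    rw [hmin]
    unfold gfun at h
    nlinarith [h]
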